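/- arXiv:1911.07767 — 4 statements merged into one kernel-verified Lean document; each statement's English description precedes it below -/
import Mathlib

section
/- Let A ∈ ℝ^{n×n}, B ∈ ℝ^{n×m}, and suppose U ∈ ℝ^{m×T}, X₀ ∈ ℝ^{n×T} satisfy rank [U; X₀] = n + m (the stacked (m+n) × T matrix has full row rank). Then for every matrix K ∈ ℝ^{m×n} there exists G ∈ ℝ^{T×n} such that U G = K and X₀ G = I_n. -/
open Matrix

theorem Matrix.exists_mul_eq_one_of_rank_eq_card {K m n : Type*} [Field K] [Fintype m]
    [Fintype n] [DecidableEq m] {M : Matrix m n K} (h : M.rank = Fintype.card m) :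
    ∃ R : Matrix n m K, M * R = 1 := by
  classical
  have hrange : LinearMap.range M.mulVecLin = ⊤ :=
    Submodule.eq_top_of_finrank_eq (by rw [Module.finrank_fintype_fun_eq_card, ← h]; rfl)
  obtain ⟨g, hg⟩ := M.mulVecLin.exists_rightInverse_of_surjective hrange
  refine ⟨LinearMap.toMatrix' g, Matrix.toLin'.injective ?_⟩
  rwa [Matrix.toLin'_mul, Matrix.toLin'_toMatrix', Matrix.toLin'_one]

theorem Matrix.exists_mul_eq_of_rank_eq_card {K m n o : Type*} [Field K] [Fintype m]
    [Fintype n] {M : Matrix m n K} (h : M.rank = Fintype.card m) (N : Matrix m o K) :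
    ∃ G : Matrix n o K, M * G = N := by
  classical
  obtain ⟨R, hR⟩ := exists_mul_eq_one_of_rank_eq_card h
  exact ⟨R * N, by rw [← Matrix.mul_assoc, hR, Matrix.one_mul]⟩

theorem data_parametrization_exists_general (n m T : ℕ)
    (U : Matrix (Fin m) (Fin T) ℝ) (X₀ : Matrix (Fin n) (Fin T) ℝ)
    (hrank : (Matrix.fromRows U X₀).rank = m + n) :
    ∀ K : Matrix (Fin m) (Fin n) ℝ,
      ∃ G : Matrix (Fin T) (Fin n) ℝ, U * G = K ∧ X₀ * G = 1 := by
  intro K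
  have hfull : (fromRows U X₀).rank = Fintype.card (Fin m ⊕ Fin n) := by simpa using hrank
  obtain ⟨G, hG⟩ := exists_mul_eq_of_rank_eq_card hfull (fromRows K 1)
  rw [fromRows_mul, fromRows_ext_iff] at hG
  exact ⟨G, hG⟩

/-- If the stacked data matrix `[U; X₀]` has full row rank `m + n`, then for every
`K` there is `G` with `U G = K` and `X₀ G = I`. -/
theorem data_parametrization_exists (n m T : ℕ)
    (A : Matrix (Fin n) (Fin n) ℝ) (B : Matrix (Fin n) (Fin m) ℝ)
    (U : Matrix (Fin m) (Fin T) ℝ) (X₀ : Matrix (Fin n) (Fin T) ℝ)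
    (hrank : (Matrix.fromRows U X₀).rank = m + n) :
    ∀ K : Matrix (Fin m) (Fin n) ℝ,
      ∃ G : Matrix (Fin T) (Fin n) ℝ, U * G = K ∧ X₀ * G = 1 :=
  data_parametrization_exists_general n m T U X₀ hrank
end

section
/- Let A ∈ ℝ^{n×n}, B ∈ ℝ^{n×m}, and let U ∈ ℝ^{m×T}, X₀ ∈ ℝ^{n×T}, X₁ ∈ ℝ^{n×T} satisfy X₁ = A X₀ + B U. If G ∈ ℝ^{T×n} satisfies U G = K and X₀ G = I_n for some K ∈ ℝ^{m×n}, then A + B K = X₁ G. -/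
open Matrix

theorem Matrix.add_mul_mul_of_mul_eq_one {R l m p : Type*} [Semiring R]
    [Fintype l] [Fintype m] [Fintype p] [DecidableEq l]
    (A : Matrix l l R) (B : Matrix l m R) (U : Matrix m p R) (X₀ : Matrix l p R)
    (G : Matrix p l R) (hXG : X₀ * G = 1) :
    (A * X₀ + B * U) * G = A + B * (U * G) := by
  rw [Matrix.add_mul, Matrix.mul_assoc, Matrix.mul_assoc, hXG, Matrix.mul_one]

/-- Data-driven parametrization of the closed loop: if `X₁ = A X₀ + B U`,
`U G = K` and `X₀ G = I`, then `A + B K = X₁ G`. -/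
theorem closed_loop_data_param (n m T : ℕ)
    (A : Matrix (Fin n) (Fin n) ℝ) (B : Matrix (Fin n) (Fin m) ℝ)
    (U : Matrix (Fin m) (Fin T) ℝ) (X₀ X₁ : Matrix (Fin n) (Fin T) ℝ)
    (hdata : X₁ = A * X₀ + B * U)
    (G : Matrix (Fin T) (Fin n) ℝ) (K : Matrix (Fin m) (Fin n) ℝ)
    (hUG : U * G = K) (hXG : X₀ * G = 1) :
    A + B * K = X₁ * G := by
  rw [hdata, Matrix.add_mul_mul_of_mul_eq_one A B U X₀ G hXG, hUG]
end

section
/- Consider the scalar quantities in the dynamic programming recursion: define V_N(x) = xᵀ Q_f x and V_k(x) = min_{u ∈ ℝ^m} [xᵀ Q_x x + uᵀ R u + V_{k+1}(A x + B u)] for k = N-1, ..., 0. Then V_k(x) = xᵀ P(k) x where P(k) is given by the discrete-time Riccati recursion P(N) = Q_f, P(k) = Q_x + Aᵀ P(k+1) A - Aᵀ P(k+1) B (R + Bᵀ P(k+1) B)⁻¹ Bᵀ P(k+1) A, and the minimizer is u = K*(k) x with K*(k) = -(R + Bᵀ P(k+1) B)⁻¹ Bᵀ P(k+1) A. -/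
open Matrix

private lemma tdot {p q : ℕ} (M : Matrix (Fin p) (Fin q) ℝ)
    (v : Fin p → ℝ) (w : Fin q → ℝ) : v ⬝ᵥ M *ᵥ w = (Mᵀ *ᵥ v) ⬝ᵥ w := by
  rw [Matrix.dotProduct_mulVec, Matrix.mulVec_transpose]

private lemma quad_dot {p q r : ℕ} (M1 : Matrix (Fin p) (Fin q) ℝ)
    (P : Matrix (Fin p) (Fin p) ℝ) (M2 : Matrix (Fin p) (Fin r) ℝ)
    (a : Fin q → ℝ) (b : Fin r → ℝ) :
    (M1 *ᵥ a) ⬝ᵥ P *ᵥ (M2 *ᵥ b) = a ⬝ᵥ (M1ᵀ * P * M2) *ᵥ b := by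
  rw [← Matrix.mulVec_mulVec, ← Matrix.mulVec_mulVec, tdot M1ᵀ a, Matrix.transpose_transpose]

private lemma symm_dot {p : ℕ} {S : Matrix (Fin p) (Fin p) ℝ} (hS : Sᵀ = S)
    (a b : Fin p → ℝ) : a ⬝ᵥ S *ᵥ b = b ⬝ᵥ S *ᵥ a := by
  rw [tdot, hS, dotProduct_comm]

/-- Core single-stage lemma: completion of squares. -/
private lemma lqr_stage {n m : ℕ}
    (A : Matrix (Fin n) (Fin n) ℝ) (B : Matrix (Fin n) (Fin m) ℝ)
    (Qx : Matrix (Fin n) (Fin n) ℝ) (hQx : Qx.PosSemidef)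
    (R : Matrix (Fin m) (Fin m) ℝ) (hR : R.PosDef)
    (P1 Pk : Matrix (Fin n) (Fin n) ℝ) (hP1 : P1.PosSemidef)
    (hPk : Pk = Qx + Aᵀ * P1 * A - Aᵀ * P1 * B * (R + Bᵀ * P1 * B)⁻¹ * (Bᵀ * P1 * A)) :
    (∀ x u, x ⬝ᵥ Pk *ᵥ x ≤
        x ⬝ᵥ Qx *ᵥ x + u ⬝ᵥ R *ᵥ u + (A *ᵥ x + B *ᵥ u) ⬝ᵥ P1 *ᵥ (A *ᵥ x + B *ᵥ u)) ∧
    (∀ x, (fun u => x ⬝ᵥ Qx *ᵥ x + u ⬝ᵥ R *ᵥ u +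
          (A *ᵥ x + B *ᵥ u) ⬝ᵥ P1 *ᵥ (A *ᵥ x + B *ᵥ u))
        ((-(((R + Bᵀ * P1 * B)⁻¹) * (Bᵀ * P1 * A))) *ᵥ x) = x ⬝ᵥ Pk *ᵥ x) ∧
    Pk.PosSemidef := by
  have hP1t : P1ᵀ = P1 := by
    have := hP1.isHermitian
    rwa [Matrix.IsHermitian, Matrix.conjTranspose_eq_transpose_of_trivial] at this
  set S : Matrix (Fin m) (Fin m) ℝ := R + Bᵀ * P1 * B with hSdef
  have hBPB : (Bᵀ * P1 * B).PosSemidef := by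
    have := hP1.conjTranspose_mul_mul_same B
    rwa [Matrix.conjTranspose_eq_transpose_of_trivial] at this
  have hS : S.PosDef := hR.add_posSemidef hBPB
  have hSsym : Sᵀ = S := by
    have := hS.isHermitian
    rwa [Matrix.IsHermitian, Matrix.conjTranspose_eq_transpose_of_trivial] at this
  have hdet : IsUnit S.det := hS.det_pos.ne'.isUnit
  have hSinv : S * S⁻¹ = 1 := Matrix.mul_nonsing_inv S hdet
  have hSinvT : (S⁻¹)ᵀ = S⁻¹ := by
    rw [Matrix.transpose_nonsing_inv, hSsym]
  -- the key identity
  have key : ∀ x u,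
      x ⬝ᵥ Qx *ᵥ x + u ⬝ᵥ R *ᵥ u + (A *ᵥ x + B *ᵥ u) ⬝ᵥ P1 *ᵥ (A *ᵥ x + B *ᵥ u)
      = (u + S⁻¹ *ᵥ ((Bᵀ * P1 * A) *ᵥ x)) ⬝ᵥ S *ᵥ (u + S⁻¹ *ᵥ ((Bᵀ * P1 * A) *ᵥ x))
        + x ⬝ᵥ Pk *ᵥ x := by
    intro x u
    set w : Fin m → ℝ := (Bᵀ * P1 * A) *ᵥ x with hw
    set v : Fin m → ℝ := S⁻¹ *ᵥ w with hv
    have hABt : (Aᵀ * P1 * B)ᵀ = Bᵀ * P1 * A := by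
      simp [Matrix.transpose_mul, hP1t, Matrix.mul_assoc]
    have hxABu : ∀ z : Fin m → ℝ, x ⬝ᵥ (Aᵀ * P1 * B) *ᵥ z = w ⬝ᵥ z := by
      intro z; rw [tdot, hABt, hw]
    have hSv : S *ᵥ v = w := by
      rw [hv, Matrix.mulVec_mulVec, hSinv, Matrix.one_mulVec]
    -- expand LHS
    have eL : (A *ᵥ x + B *ᵥ u) ⬝ᵥ P1 *ᵥ (A *ᵥ x + B *ᵥ u)
        = x ⬝ᵥ (Aᵀ * P1 * A) *ᵥ x + 2 * (u ⬝ᵥ w) + u ⬝ᵥ (Bᵀ * P1 * B) *ᵥ u := by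
      rw [Matrix.mulVec_add, dotProduct_add, add_dotProduct,
        add_dotProduct, quad_dot, quad_dot, quad_dot, quad_dot]
      have h1 : x ⬝ᵥ (Aᵀ * P1 * B) *ᵥ u = u ⬝ᵥ w := by
        rw [hxABu u, dotProduct_comm]
      rw [h1, ← hw]; ring
    -- expand RHS quadratic
    have eR : (u + v) ⬝ᵥ S *ᵥ (u + v)
        = u ⬝ᵥ S *ᵥ u + 2 * (u ⬝ᵥ w) + w ⬝ᵥ S⁻¹ *ᵥ w := by
      rw [Matrix.mulVec_add, dotProduct_add, add_dotProduct,
        add_dotProduct]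
      have h1 : u ⬝ᵥ S *ᵥ v = u ⬝ᵥ w := by rw [hSv]
      have h2 : v ⬝ᵥ S *ᵥ u = u ⬝ᵥ w := by rw [symm_dot hSsym, hSv]
      have h3 : v ⬝ᵥ S *ᵥ v = w ⬝ᵥ S⁻¹ *ᵥ w := by
        rw [hSv, hv, dotProduct_comm]
      rw [h1, h2, h3]; ring
    -- expand Pk
    have ePk : x ⬝ᵥ Pk *ᵥ x
        = x ⬝ᵥ Qx *ᵥ x + x ⬝ᵥ (Aᵀ * P1 * A) *ᵥ x - w ⬝ᵥ S⁻¹ *ᵥ w := by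
      rw [hPk]
      rw [Matrix.sub_mulVec, Matrix.add_mulVec, dotProduct_sub,
        dotProduct_add]
      have h4 : x ⬝ᵥ (Aᵀ * P1 * B * S⁻¹ * (Bᵀ * P1 * A)) *ᵥ x = w ⬝ᵥ S⁻¹ *ᵥ w := by
        have : Aᵀ * P1 * B * S⁻¹ * (Bᵀ * P1 * A) = (Aᵀ * P1 * B) * (S⁻¹ * (Bᵀ * P1 * A)) := by
          rw [Matrix.mul_assoc]
        rw [this, ← Matrix.mulVec_mulVec, hxABu, ← Matrix.mulVec_mulVec, ← hw]
      rw [h4]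
    have eS : u ⬝ᵥ S *ᵥ u = u ⬝ᵥ R *ᵥ u + u ⬝ᵥ (Bᵀ * P1 * B) *ᵥ u := by
      rw [hSdef, Matrix.add_mulVec, dotProduct_add]
    rw [eL, eR, ePk, eS]; ring
  have hKx : ∀ x : Fin n → ℝ,
      ((-(S⁻¹ * (Bᵀ * P1 * A))) *ᵥ x) + S⁻¹ *ᵥ ((Bᵀ * P1 * A) *ᵥ x) = 0 := by
    intro x
    rw [Matrix.neg_mulVec, Matrix.mulVec_mulVec, neg_add_cancel]
  have hnonneg : ∀ z : Fin m → ℝ, 0 ≤ z ⬝ᵥ S *ᵥ z := by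
    intro z
    have := hS.posSemidef.dotProduct_mulVec_nonneg z
    simpa using this
  refine ⟨?_, ?_, ?_⟩
  · intro x u
    rw [key x u]
    have := hnonneg (u + S⁻¹ *ᵥ ((Bᵀ * P1 * A) *ᵥ x))
    linarith
  · intro x
    simp only
    rw [key x _, hKx x]
    simp
  · refine PosSemidef.of_dotProduct_mulVec_nonneg ?_ ?_
    · have hQxt : Qxᵀ = Qx := by
        have := hQx.isHermitian
        rwa [Matrix.IsHermitian, Matrix.conjTranspose_eq_transpose_of_trivial] at this
      rw [Matrix.IsHermitian, Matrix.conjTranspose_eq_transpose_of_trivial, hPk]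
      simp only [Matrix.transpose_sub, Matrix.transpose_add, Matrix.transpose_mul,
        Matrix.transpose_transpose, hP1t, hQxt, hSinvT, Matrix.mul_assoc]
    · intro x
      have h0 := key x ((-(S⁻¹ * (Bᵀ * P1 * A))) *ᵥ x)
      rw [hKx x] at h0
      simp only [dotProduct_zero, zero_dotProduct, Matrix.mulVec_zero,
        zero_add] at h0
      have hx : star x = x := by simp
      rw [hx, ← h0]
      have := hP1.dotProduct_mulVec_nonneg (A *ᵥ x + B *ᵥ (-(S⁻¹ * (Bᵀ * P1 * A)) *ᵥ x))
      have hq := hQx.dotProduct_mulVec_nonneg x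
      have hr := hR.posSemidef.dotProduct_mulVec_nonneg ((-(S⁻¹ * (Bᵀ * P1 * A))) *ᵥ x)
      simp only [star_trivial] at this hq hr ⊢
      -- all terms nonneg
      have h1 : (0:ℝ) ≤ x ⬝ᵥ Qx *ᵥ x := by simpa using hq
      have h2 : (0:ℝ) ≤ ((-(S⁻¹ * (Bᵀ * P1 * A))) *ᵥ x) ⬝ᵥ R *ᵥ ((-(S⁻¹ * (Bᵀ * P1 * A))) *ᵥ x) := by
        simpa using hr
      have h3 : (0:ℝ) ≤ (A *ᵥ x + B *ᵥ ((-(S⁻¹ * (Bᵀ * P1 * A))) *ᵥ x)) ⬝ᵥ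
          P1 *ᵥ (A *ᵥ x + B *ᵥ ((-(S⁻¹ * (Bᵀ * P1 * A))) *ᵥ x)) := by
        simpa using this
      linarith

/-- Dynamic programming solution of the finite-horizon LQR: the value function of
the backward recursion is the quadratic form of the Riccati matrices, and the
minimizer at stage `k` is `u = K*(k) x` with
`K*(k) = -(R + Bᵀ P(k+1) B)⁻¹ Bᵀ P(k+1) A`. -/
theorem finite_horizon_lqr_value_function (n m N : ℕ)
    (A : Matrix (Fin n) (Fin n) ℝ) (B : Matrix (Fin n) (Fin m) ℝ)
    (Qx Qf : Matrix (Fin n) (Fin n) ℝ) (hQx : Qx.PosSemidef) (hQf : Qf.PosSemidef)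
    (R : Matrix (Fin m) (Fin m) ℝ) (hR : R.PosDef)
    (V : ℕ → (Fin n → ℝ) → ℝ)
    (hVN : ∀ x, V N x = x ⬝ᵥ Qf.mulVec x)
    (hVrec : ∀ k, k < N → ∀ x, V k x =
      ⨅ u : Fin m → ℝ,
        (x ⬝ᵥ Qx.mulVec x + u ⬝ᵥ R.mulVec u + V (k + 1) (A.mulVec x + B.mulVec u)))
    (P : ℕ → Matrix (Fin n) (Fin n) ℝ)
    (hPN : P N = Qf)
    (hPrec : ∀ k, k < N → P k = Qx + Aᵀ * P (k+1) * A -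
      Aᵀ * P (k+1) * B * (R + Bᵀ * P (k+1) * B)⁻¹ * (Bᵀ * P (k+1) * A))
    (Kstar : ℕ → Matrix (Fin m) (Fin n) ℝ)
    (hKstar : ∀ k, k < N →
      Kstar k = -((R + Bᵀ * P (k+1) * B)⁻¹ * (Bᵀ * P (k+1) * A))) :
    (∀ k, k ≤ N → ∀ x, V k x = x ⬝ᵥ (P k).mulVec x) ∧
    (∀ k, k < N → ∀ x,
      IsLeast (Set.range fun u : Fin m → ℝ =>
          x ⬝ᵥ Qx.mulVec x + u ⬝ᵥ R.mulVec u + V (k + 1) (A.mulVec x + B.mulVec u))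
        (x ⬝ᵥ Qx.mulVec x + ((Kstar k).mulVec x) ⬝ᵥ R.mulVec ((Kstar k).mulVec x) +
          V (k + 1) (A.mulVec x + B.mulVec ((Kstar k).mulVec x)))) := by
  have main : ∀ d k, k + d = N →
      (P k).PosSemidef ∧ ∀ x, V k x = x ⬝ᵥ (P k).mulVec x := by
    intro d
    induction d with
    | zero =>
      intro k hk
      have : k = N := by omega
      subst this
      exact ⟨hPN ▸ hQf, fun x => by rw [hVN, hPN]⟩
    | succ d ih =>
      intro k hk
      have hkN : k < N := by omega
      obtain ⟨hPsd1, hV1⟩ := ih (k+1) (by omega)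
      obtain ⟨hlb, heq, hPsd⟩ := lqr_stage A B Qx hQx R hR (P (k+1)) (P k) hPsd1 (hPrec k hkN)
      refine ⟨hPsd, fun x => ?_⟩
      rw [hVrec k hkN x]
      have hfun : (fun u : Fin m → ℝ =>
            x ⬝ᵥ Qx.mulVec x + u ⬝ᵥ R.mulVec u + V (k+1) (A.mulVec x + B.mulVec u))
          = fun u => x ⬝ᵥ Qx *ᵥ x + u ⬝ᵥ R *ᵥ u +
              (A *ᵥ x + B *ᵥ u) ⬝ᵥ (P (k+1)) *ᵥ (A *ᵥ x + B *ᵥ u) := by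
        funext u; rw [hV1]
      rw [hfun]
      have hleast : IsLeast (Set.range fun u : Fin m → ℝ =>
          x ⬝ᵥ Qx *ᵥ x + u ⬝ᵥ R *ᵥ u +
            (A *ᵥ x + B *ᵥ u) ⬝ᵥ (P (k+1)) *ᵥ (A *ᵥ x + B *ᵥ u))
          (x ⬝ᵥ (P k) *ᵥ x) := by
        constructor
        · exact ⟨_, heq x⟩
        · rintro y ⟨u, rfl⟩
          exact hlb x u
      exact hleast.csInf_eq
  constructor
  · intro k hk x
    exact (main (N - k) k (by omega)).2 x
  · intro k hk x
    obtain ⟨hPsd1, hV1⟩ := main (N - (k+1)) (k+1) (by omega)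
    obtain ⟨hlb, heq, hPsd⟩ := lqr_stage A B Qx hQx R hR (P (k+1)) (P k) hPsd1 (hPrec k hk)
    constructor
    · exact ⟨(Kstar k).mulVec x, rfl⟩
    · rintro y ⟨u, rfl⟩
      simp only
      rw [hV1, hV1, hKstar k hk]
      have h := heq x
      simp only at h
      rw [h]
      exact hlb x u
end

section
/- Let Q ∈ ℝ^{T×n}, S ∈ ℝ^{n×n} with S invertible, U ∈ ℝ^{m×T}, X₀ ∈ ℝ^{n×T}, X₁ ∈ ℝ^{n×T}, A ∈ ℝ^{n×n}, B ∈ ℝ^{n×m} with X₁ = A X₀ + B U. If X₀ Q = S and K := U Q S⁻¹, then A + B K = X₁ Q S⁻¹. -/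
open Matrix

namespace Matrix

variable {l m n R : Type*} [Fintype l] [Fintype m] [Fintype n]

theorem add_mul_mul_eq_of_mul_eq_one [DecidableEq n] [Semiring R] {X₀ : Matrix n l R}
    {G : Matrix l n R} (hG : X₀ * G = 1) (A : Matrix n n R) (B : Matrix n m R)
    (U : Matrix m l R) : A + B * (U * G) = (A * X₀ + B * U) * G := by
  rw [Matrix.add_mul, Matrix.mul_assoc A, hG, Matrix.mul_one, Matrix.mul_assoc]

theorem mul_mul_nonsing_inv_eq_one [DecidableEq n] [CommRing R] {X₀ : Matrix n l R}
    {Q : Matrix l n R} {S : Matrix n n R} (hXQ : X₀ * Q = S) (hS : IsUnit S.det) :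
    X₀ * (Q * S⁻¹) = 1 := by
  rw [← Matrix.mul_assoc, hXQ, mul_nonsing_inv S hS]

end Matrix

/-- Key step of the data-driven SDP reformulation: if `X₁ = A X₀ + B U`,
`X₀ Q = S` with `S` invertible and `K = U Q S⁻¹`, then `A + B K = X₁ Q S⁻¹`. -/
theorem data_driven_sdp_closed_loop (n m T : ℕ)
    (Q : Matrix (Fin T) (Fin n) ℝ)
    (S : Matrix (Fin n) (Fin n) ℝ) (hS : IsUnit S.det)
    (U : Matrix (Fin m) (Fin T) ℝ) (X₀ X₁ : Matrix (Fin n) (Fin T) ℝ)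
    (A : Matrix (Fin n) (Fin n) ℝ) (B : Matrix (Fin n) (Fin m) ℝ)
    (hdata : X₁ = A * X₀ + B * U)
    (hXQ : X₀ * Q = S)
    (K : Matrix (Fin m) (Fin n) ℝ) (hK : K = U * Q * S⁻¹) :
    A + B * K = X₁ * Q * S⁻¹ := by
  rw [hK, hdata, Matrix.mul_assoc U, Matrix.mul_assoc _ Q,
    add_mul_mul_eq_of_mul_eq_one (mul_mul_nonsing_inv_eq_one hXQ hS)]
end
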